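/- arXiv:2308.00498 — 5 statements merged into one kernel-verified Lean document; each statement's English description precedes it below -/
import Mathlib

section
/- Let k ≥ 3 and let (G_i) be the C_k-bootstrap process on a graph G. For all vertices x, y and all i ≥ 1, the distance in G satisfies dist_{G_0}(x,y) ≤ (k-1)^i · dist_{G_i}(x,y). -/
/-- One step of the `C_k`-bootstrap process: add every edge whose endpoints are
joined by a path of length `k-1` in the current graph. -/
def cycleStep (k : ℕ) {V : Type*} (G : SimpleGraph V) : SimpleGraph V where
  Adj u v := G.Adj u v ∨ (u ≠ v ∧ ∃ p : G.Walk u v, p.IsPath ∧ p.length = k - 1)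
  symm := by
    constructor
    intro u v h
    rcases h with h | ⟨hne, p, hp, hl⟩
    · exact Or.inl h.symm
    · exact Or.inr ⟨hne.symm, p.reverse, hp.reverse, by simpa using hl⟩
  loopless := by
    constructor
    intro v h
    rcases h with h | ⟨hne, _⟩
    · exact G.irrefl h
    · exact hne rfl

/-- The `C_k`-bootstrap process on `G`. -/
def cycleProcess (k : ℕ) {V : Type*} (G : SimpleGraph V) : ℕ → SimpleGraph V
  | 0 => G
  | (i + 1) => cycleStep k (cycleProcess k G i)

lemma cycleStep_adj_edist_le (k : ℕ) (hk : 3 ≤ k) {V : Type*} (G : SimpleGraph V)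
    {u v : V} (h : (cycleStep k G).Adj u v) : G.edist u v ≤ (k - 1 : ℕ) := by
  rcases h with h | ⟨_, p, _, hl⟩
  · calc G.edist u v ≤ (h.toWalk.length : ℕ∞) := SimpleGraph.edist_le _
    _ ≤ (k - 1 : ℕ) := by
        simp only [SimpleGraph.Adj.toWalk, SimpleGraph.Walk.length_cons,
          SimpleGraph.Walk.length_nil]
        exact_mod_cast Nat.one_le_iff_ne_zero.mpr (by omega)
  · calc G.edist u v ≤ (p.length : ℕ∞) := SimpleGraph.edist_le _
    _ = (k - 1 : ℕ) := by rw [hl]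

lemma cycleStep_walk_edist_le (k : ℕ) (hk : 3 ≤ k) {V : Type*} (G : SimpleGraph V)
    {u v : V} (p : (cycleStep k G).Walk u v) :
    G.edist u v ≤ ((k - 1 : ℕ) : ℕ∞) * p.length := by
  induction p with
  | nil => simp [SimpleGraph.edist_self]
  | cons h q ih =>
    calc G.edist _ _ ≤ G.edist _ _ + G.edist _ _ := SimpleGraph.edist_triangle
    _ ≤ (k - 1 : ℕ) + ((k - 1 : ℕ) : ℕ∞) * q.length :=
        add_le_add (cycleStep_adj_edist_le k hk G h) ih
    _ = ((k - 1 : ℕ) : ℕ∞) * (q.length + 1) := by ring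
    _ = ((k - 1 : ℕ) : ℕ∞) * (SimpleGraph.Walk.cons h q).length := by
        push_cast [SimpleGraph.Walk.length_cons]; ring

lemma cycleStep_edist_le (k : ℕ) (hk : 3 ≤ k) {V : Type*} (G : SimpleGraph V)
    (u v : V) : G.edist u v ≤ ((k - 1 : ℕ) : ℕ∞) * (cycleStep k G).edist u v := by
  by_cases htop : (cycleStep k G).edist u v = ⊤
  · rw [htop, ENat.mul_top (by exact_mod_cast (by omega : k - 1 ≠ 0))]
    exact le_top
  · obtain ⟨p, hp⟩ := SimpleGraph.exists_walk_of_edist_ne_top htop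
    calc G.edist u v ≤ ((k - 1 : ℕ) : ℕ∞) * p.length := cycleStep_walk_edist_le k hk G p
    _ = _ := by rw [hp]

lemma cycleProcess_edist_le (k : ℕ) (hk : 3 ≤ k) {V : Type*} (G : SimpleGraph V)
    (x y : V) (i : ℕ) :
    G.edist x y ≤ (((k - 1) ^ i : ℕ) : ℕ∞) * (cycleProcess k G i).edist x y := by
  induction i with
  | zero => simp [cycleProcess]
  | succ i ih =>
    calc G.edist x y ≤ (((k - 1) ^ i : ℕ) : ℕ∞) * (cycleProcess k G i).edist x y := ih
    _ ≤ (((k - 1) ^ i : ℕ) : ℕ∞) *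
        (((k - 1 : ℕ) : ℕ∞) * (cycleProcess k G (i + 1)).edist x y) :=
          mul_le_mul' le_rfl (cycleStep_edist_le k hk (cycleProcess k G i) x y)
    _ = (((k - 1) ^ (i + 1) : ℕ) : ℕ∞) * (cycleProcess k G (i + 1)).edist x y := by
        rw [← mul_assoc]; push_cast [pow_succ]; ring_nf

/-- In the `C_k`-bootstrap process, `dist_{G_0}(x,y) ≤ (k-1)^i ⬝ dist_{G_i}(x,y)`
(in the extended naturals). -/
theorem cycleProcess_edist_lower (k : ℕ) (hk : 3 ≤ k) {V : Type*} (G : SimpleGraph V)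
    (x y : V) (i : ℕ) (hi : 1 ≤ i) :
    G.edist x y ≤ (((k - 1) ^ i : ℕ) : ℕ∞) * (cycleProcess k G i).edist x y :=
  cycleProcess_edist_le k hk G x y i
end

section
/- Let k ≥ 3 and n' ≥ 3(k-1). In the C_k-bootstrap process (P^i) on the path P_{n'}, every pair of vertices x < y with y - x odd and y - x ≤ k is adjacent in P^2. -/
/-- An increasing walk in a graph on `Fin n` containing all consecutive edges. -/
lemma upWalk {n : ℕ} (G : SimpleGraph (Fin n))
    (hG : ∀ (i : ℕ) (hi : i + 1 < n), G.Adj ⟨i, Nat.lt_of_succ_lt hi⟩ ⟨i + 1, hi⟩) :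
    ∀ (m s : ℕ) (u v : Fin n), u.val = s → v.val = s + m →
      ∃ w : G.Walk u v, w.length = m ∧ w.support.map Fin.val = List.range' s (m + 1) := by
  intro m
  induction m with
  | zero =>
    intro s u v hu hv
    have : u = v := Fin.ext (by omega)
    subst this
    exact ⟨SimpleGraph.Walk.nil, rfl, by simp [hu, List.range'_succ]⟩
  | succ m ih =>
    intro s u v hu hv
    have hs1 : s + 1 < n := by have := v.isLt; omega
    have hadj : G.Adj u ⟨s + 1, hs1⟩ := by
      have := hG s hs1
      have : u = ⟨s, Nat.lt_of_succ_lt hs1⟩ := Fin.ext hu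
      rw [this]; exact hG s hs1
    obtain ⟨w, hw, hsup⟩ := ih (s + 1) ⟨s + 1, hs1⟩ v rfl (by omega)
    refine ⟨SimpleGraph.Walk.cons hadj w, by simp [hw], ?_⟩
    rw [List.range'_succ]
    simp [hsup, hu]

/-- All consecutive edges are present in the path graph. -/
lemma pathGraph_consec {n : ℕ} (i : ℕ) (hi : i + 1 < n) :
    (SimpleGraph.pathGraph n).Adj ⟨i, Nat.lt_of_succ_lt hi⟩ ⟨i + 1, hi⟩ := by
  rw [SimpleGraph.pathGraph_adj]; left; rfl

/-- In `cycleStep k (pathGraph n)`, vertices at distance `k-1` are adjacent. -/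
lemma jump_adj {n k : ℕ} (hk : 3 ≤ k) (u v : Fin n) (huv : (v : ℕ) = (u : ℕ) + (k - 1)) :
    (cycleStep k (SimpleGraph.pathGraph n)).Adj u v := by
  obtain ⟨w, hw, hsup⟩ := upWalk (SimpleGraph.pathGraph n) pathGraph_consec (k - 1) u u v rfl huv
  refine Or.inr ⟨?_, w, ?_, hw⟩
  · intro h; subst h; omega
  · rw [SimpleGraph.Walk.isPath_def]
    have : (w.support.map Fin.val).Nodup := by rw [hsup]; exact List.nodup_range'
    exact this.of_map _

/-- consecutive adjacency in `cycleStep k (pathGraph n)`. -/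
lemma step_consec {n k : ℕ} (i : ℕ) (hi : i + 1 < n) :
    (cycleStep k (SimpleGraph.pathGraph n)).Adj ⟨i, Nat.lt_of_succ_lt hi⟩ ⟨i + 1, hi⟩ :=
  Or.inl (pathGraph_consec i hi)

/-- For `n' ≥ 3(k-1)`, in the `C_k`-process on `P_{n'}` every pair of vertices whose
difference is odd and at most `k` is adjacent at time `2`. -/
theorem cycleProcess_path_small_odd (k n' : ℕ) (hk : 3 ≤ k) (hn : 3 * (k - 1) ≤ n')
    (x y : Fin n') (hxy : x < y) (hodd : Odd ((y : ℕ) - (x : ℕ)))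
    (hle : (y : ℕ) - (x : ℕ) ≤ k) :
    (cycleProcess k (SimpleGraph.pathGraph n') 2).Adj x y := by
  obtain ⟨t, ht⟩ := hodd
  have hxv : (x : ℕ) < (y : ℕ) := hxy
  have hyn : (y : ℕ) < n' := y.isLt
  show (cycleStep k (cycleStep k (SimpleGraph.pathGraph n'))).Adj x y
  set G1 := cycleStep k (SimpleGraph.pathGraph n') with hG1
  have hne : x ≠ y := by
    intro h
    rw [h] at hxv
    omega
  refine Or.inr ⟨hne, ?_⟩
  by_cases hA : (x : ℕ) + t + k ≤ n'
  · -- room on the right: go up `t`, jump up `k-1`, come down `k-2-t`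
    have h1 : (x : ℕ) + t < n' := by omega
    have h2 : (x : ℕ) + t + (k - 1) < n' := by omega
    obtain ⟨w1, hl1, hs1⟩ := upWalk G1 step_consec t (x : ℕ) x ⟨(x : ℕ) + t, h1⟩ rfl rfl
    have e : G1.Adj ⟨(x : ℕ) + t, h1⟩ ⟨(x : ℕ) + t + (k - 1), h2⟩ := jump_adj hk _ _ rfl
    obtain ⟨w2, hl2, hs2⟩ := upWalk G1 step_consec (k - 2 - t) (y : ℕ) y
      ⟨(x : ℕ) + t + (k - 1), h2⟩ rfl (by show (x : ℕ) + t + (k - 1) = (y : ℕ) + (k - 2 - t); omega)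
    refine ⟨w1.append (SimpleGraph.Walk.cons e w2.reverse), ?_, ?_⟩
    · rw [SimpleGraph.Walk.isPath_def]
      have hsup : ((w1.append (SimpleGraph.Walk.cons e w2.reverse)).support.map Fin.val)
          = List.range' (x : ℕ) (t + 1) ++ (List.range' (y : ℕ) (k - 2 - t + 1)).reverse := by
        rw [SimpleGraph.Walk.support_append, SimpleGraph.Walk.support_cons]
        simp [SimpleGraph.Walk.support_reverse, hs1, hs2, List.map_reverse]
      refine List.Nodup.of_map Fin.val ?_
      rw [hsup]
      refine List.Nodup.append (List.nodup_range') (List.nodup_reverse.mpr (List.nodup_range')) ?_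
      intro a ha hb
      rw [List.mem_range'_1] at ha
      rw [List.mem_reverse, List.mem_range'_1] at hb
      omega
    · rw [SimpleGraph.Walk.length_append, SimpleGraph.Walk.length_cons,
        SimpleGraph.Walk.length_reverse, hl1, hl2]
      omega
  · -- room on the left: go down `k-2-t`, jump up `k-1`, go up `t`
    have hb : k - 2 - t ≤ (x : ℕ) := by omega
    have h1 : (x : ℕ) - (k - 2 - t) < n' := by omega
    have h2 : (x : ℕ) - (k - 2 - t) + (k - 1) < n' := by omega
    obtain ⟨w1, hl1, hs1⟩ := upWalk G1 step_consec (k - 2 - t) ((x : ℕ) - (k - 2 - t))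
      ⟨(x : ℕ) - (k - 2 - t), h1⟩ x rfl (by show (x : ℕ) = (x : ℕ) - (k - 2 - t) + (k - 2 - t); omega)
    have e : G1.Adj ⟨(x : ℕ) - (k - 2 - t), h1⟩ ⟨(x : ℕ) - (k - 2 - t) + (k - 1), h2⟩ :=
      jump_adj hk _ _ rfl
    obtain ⟨w2, hl2, hs2⟩ := upWalk G1 step_consec t ((y : ℕ) - t)
      ⟨(x : ℕ) - (k - 2 - t) + (k - 1), h2⟩ y
      (by show (x : ℕ) - (k - 2 - t) + (k - 1) = (y : ℕ) - t; omega)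
      (by show (y : ℕ) = (y : ℕ) - t + t; omega)
    refine ⟨w1.reverse.append (SimpleGraph.Walk.cons e w2), ?_, ?_⟩
    · rw [SimpleGraph.Walk.isPath_def]
      have hsup : ((w1.reverse.append (SimpleGraph.Walk.cons e w2)).support.map Fin.val)
          = (List.range' ((x : ℕ) - (k - 2 - t)) (k - 2 - t + 1)).reverse
            ++ List.range' ((y : ℕ) - t) (t + 1) := by
        rw [SimpleGraph.Walk.support_append, SimpleGraph.Walk.support_cons]
        simp [SimpleGraph.Walk.support_reverse, hs1, hs2, List.map_reverse]
      refine List.Nodup.of_map Fin.val ?_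
      rw [hsup]
      refine List.Nodup.append (List.nodup_reverse.mpr (List.nodup_range')) (List.nodup_range') ?_
      intro a ha hb'
      rw [List.mem_reverse, List.mem_range'_1] at ha
      rw [List.mem_range'_1] at hb'
      omega
    · rw [SimpleGraph.Walk.length_append, SimpleGraph.Walk.length_cons,
        SimpleGraph.Walk.length_reverse, hl1, hl2]
      omega
end

section
/- Let k ≥ 3 and i ≥ 3. Define A_i = {(k-1)^i - α(k-2) - βk : α, β ∈ ℕ} and A'_i = {(k-1)^i - α(k-2) - βk : α, β ∈ ℕ, α + β ≤ (k-1)^{i-2}(k-2)}. Then every element of A_i lying in the interval [(k-1)^{i-2} + 2(k-1), (k-1)^i] belongs to A'_i. -/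
/-!
Write `k = c + 2` and `N = (k-1)^i - m = α c + β (c + 2)`. Replacing `α` by `α % k` and
moving `(α / k) c` copies of `k` into `β` keeps `N` and leaves `α < k`; then
`k (α + β) = N + 2α ≤ N + 2(k-1)`, and the lower end of the interval says exactly that
`N + 2(k-1) ≤ (k-1)^(i-2) c k`.
-/

theorem mul_add_mul_eq_mod_mul_add_div (a b α β : ℕ) :
    α * a + β * b = α % b * a + (β + α / b * a) * b := by
  conv_lhs => rw [← Nat.mod_add_div α b]
  ring

theorem exists_coeffs_add_le {c n α β : ℕ}
    (h : α * c + β * (c + 2) + 2 * (c + 1) ≤ n * c * (c + 2)) :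
    ∃ α' β' : ℕ, α' + β' ≤ n * c ∧ α * c + β * (c + 2) = α' * c + β' * (c + 2) := by
  refine ⟨α % (c + 2), β + α / (c + 2) * c, ?_, mul_add_mul_eq_mod_mul_add_div _ _ _ _⟩
  have hα : α % (c + 2) ≤ c + 1 := Nat.le_of_lt_succ (Nat.mod_lt _ (by omega))
  rw [mul_add_mul_eq_mod_mul_add_div c (c + 2)] at h
  refine Nat.le_of_mul_le_mul_right ?_ (by omega : 0 < c + 2)
  nlinarith

theorem interval_mem_A'_general (k i : ℕ) (hk : 3 ≤ k) (hi : 3 ≤ i) (m : ℤ)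
    (hA : ∃ α β : ℕ, m = ((k : ℤ) - 1) ^ i - α * ((k : ℤ) - 2) - β * k)
    (hlb : ((k : ℤ) - 1) ^ (i - 2) + 2 * ((k : ℤ) - 1) ≤ m) :
    ∃ α β : ℕ, α + β ≤ (k - 1) ^ (i - 2) * (k - 2) ∧
      m = ((k : ℤ) - 1) ^ i - α * ((k : ℤ) - 2) - β * k := by
  obtain ⟨α, β, rfl⟩ := hA
  obtain ⟨c, rfl⟩ : ∃ c, k = c + 2 := ⟨k - 2, by omega⟩
  obtain ⟨j, rfl⟩ : ∃ j, i = j + 2 := ⟨i - 2, by omega⟩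
  have hN : α * c + β * (c + 2) + 2 * (c + 1) ≤ (c + 1) ^ j * c * (c + 2) := by
    simp only [Nat.add_sub_cancel, pow_add] at hlb
    zify
    push_cast at hlb
    linear_combination hlb
  obtain ⟨α', β', hsum, heq⟩ := exists_coeffs_add_le hN
  refine ⟨α', β', by simpa using hsum, ?_⟩
  have heqℤ : (α * c + β * (c + 2) : ℤ) = α' * c + β' * (c + 2) := by exact_mod_cast heq
  push_cast
  linarith

/-- Every element of `A_i = {(k-1)^i - α(k-2) - βk : α, β ∈ ℕ}` lying in the interval
`[(k-1)^{i-2} + 2(k-1), (k-1)^i]` belongs to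
`A'_i = {(k-1)^i - α(k-2) - βk : α + β ≤ (k-1)^{i-2}(k-2)}`. -/
theorem interval_mem_A' (k i : ℕ) (hk : 3 ≤ k) (hi : 3 ≤ i) (m : ℤ)
    (hA : ∃ α β : ℕ, m = ((k : ℤ) - 1) ^ i - α * ((k : ℤ) - 2) - β * k)
    (hlb : ((k : ℤ) - 1) ^ (i - 2) + 2 * ((k : ℤ) - 1) ≤ m)
    (hub : m ≤ ((k : ℤ) - 1) ^ i) :
    ∃ α β : ℕ, α + β ≤ (k - 1) ^ (i - 2) * (k - 2) ∧
      m = ((k : ℤ) - 1) ^ i - α * ((k : ℤ) - 2) - β * k :=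
  interval_mem_A'_general k i hk hi m hA hlb
end

section
/- Let k ≥ 3 and n' ≥ 3(k-1). In the C_k-bootstrap process on the path P_{n'}, for every i ≥ 0 and every ℓ ∈ A'_i ∩ [n'-1], any two vertices x < y of P_{n'} with y - x = ℓ are adjacent at time i, where A'_i = {(k-1)^i - α(k-2) - βk : α, β ∈ ℕ, α + β ≤ (k-1)^{i-2}(k-2)} (with the convention that for i ≤ 1 the constraint forces α = β = 0). -/
namespace CycleAux

variable {V : Type*}

lemma adj_step (k : ℕ) (G : SimpleGraph V) {u v : V} (h : G.Adj u v) :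
    (cycleStep k G).Adj u v := Or.inl h

lemma adj_mono (k : ℕ) (G : SimpleGraph V) {i j : ℕ} (hij : i ≤ j) {u v : V}
    (h : (cycleProcess k G i).Adj u v) : (cycleProcess k G j).Adj u v := by
  induction j with
  | zero => simpa [Nat.le_zero.mp hij] using h
  | succ j IH =>
    rcases Nat.lt_or_ge i (j+1) with hlt | hge
    · exact adj_step k _ (IH (Nat.lt_succ_iff.mp hlt))
    · have : i = j + 1 := le_antisymm hij hge
      subst this; exact h

lemma adj_succ_of_walk (k : ℕ) (G : SimpleGraph V) (i : ℕ) {u v : V} (hne : u ≠ v)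
    (p : (cycleProcess k G i).Walk u v) (hp : p.IsPath) (hl : p.length = k - 1) :
    (cycleProcess k G (i+1)).Adj u v :=
  Or.inr ⟨hne, p, hp, hl⟩

/-- Monotone staircase walk. -/
lemma stair {n' : ℕ} {G : SimpleGraph (Fin n')} :
    ∀ (d : List ℕ) (x y : Fin n'), (∀ a ∈ d, 1 ≤ a) → ((x:ℕ) + d.sum = (y:ℕ)) →
    (∀ (u v : Fin n'), (∃ a ∈ d, (u:ℕ) + a = (v:ℕ)) → G.Adj u v) →
    ∃ p : G.Walk x y, p.IsPath ∧ p.length = d.length ∧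
      (∀ z ∈ p.support, (x:ℕ) ≤ (z:ℕ) ∧ (z:ℕ) ≤ (y:ℕ)) ∧
      (∀ z ∈ p.support.tail, ∀ a, d.head? = some a → (x:ℕ) + a ≤ (z:ℕ)) := by
  intro d
  induction d with
  | nil =>
    intro x y _ hsum _
    have hxy : x = y := by
      apply Fin.ext; simpa using hsum
    subst hxy
    exact ⟨SimpleGraph.Walk.nil, by simp, by simp, by simp, by simp⟩
  | cons a rest IH =>
    intro x y hpos hsum hadj
    have ha : 1 ≤ a := hpos a (by simp)
    have hxa : (x:ℕ) + a ≤ (y:ℕ) := by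
      simp only [List.sum_cons] at hsum; omega
    set x' : Fin n' := ⟨(x:ℕ) + a, lt_of_le_of_lt hxa y.isLt⟩ with hx'
    have hx'v : (x':ℕ) = (x:ℕ) + a := rfl
    have he : G.Adj x x' := hadj x x' ⟨a, by simp, rfl⟩
    obtain ⟨p', hp', hlen', hbd', _⟩ :=
      IH x' y (fun b hb => hpos b (by simp [hb]))
        (by simp only [List.sum_cons] at hsum; simp [hx'v]; omega)
        (fun u v ⟨b, hb, hub⟩ => hadj u v ⟨b, by simp [hb], hub⟩)
    refine ⟨SimpleGraph.Walk.cons he p', ?_, by simp [hlen'], ?_, ?_⟩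
    · refine hp'.cons ?_
      intro hmem
      have := (hbd' x hmem).1
      omega
    · intro z hz
      rcases List.mem_cons.mp (by simpa using hz) with h | h
      · subst h; omega
      · have := hbd' z h; omega
    · intro z hz b hb
      have hab : a = b := by simpa using hb
      subst hab
      have hz' : z ∈ p'.support := by simpa using hz
      have := (hbd' z hz').1; omega

variable {n' : ℕ}

lemma adj_one (k i : ℕ) {u v : Fin n'} (h : (u:ℕ) + 1 = (v:ℕ)) :
    (cycleProcess k (SimpleGraph.pathGraph n') i).Adj u v :=
  adj_mono k _ (Nat.zero_le i) (show (SimpleGraph.pathGraph n').Adj u v from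
    SimpleGraph.pathGraph_adj.mpr (Or.inl h))

lemma adj_K (k i : ℕ) (hk : 3 ≤ k) (hi : 1 ≤ i) {u v : Fin n'} (h : (u:ℕ) + (k-1) = (v:ℕ)) :
    (cycleProcess k (SimpleGraph.pathGraph n') i).Adj u v := by
  refine adj_mono k _ hi ?_
  obtain ⟨p, hp, hlen, -, -⟩ := stair (List.replicate (k-1) 1) u v
    (by intro a ha; rw [List.eq_of_mem_replicate ha])
    (by simp; omega)
    (by
      rintro a b ⟨c, hc, hab⟩
      rw [List.eq_of_mem_replicate hc] at hab
      exact SimpleGraph.pathGraph_adj.mpr (Or.inl hab))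
  refine adj_succ_of_walk k _ 0 ?_ p hp (by simp at hlen; exact hlen)
  intro he; rw [he] at h; omega

/-- reflection -/
def σ (z : Fin n') : Fin n' := ⟨n' - 1 - (z:ℕ), by omega⟩

lemma σval (z : Fin n') : ((σ z : Fin n') : ℕ) = n' - 1 - (z:ℕ) := rfl

lemma σinj : Function.Injective (σ (n' := n')) := by
  intro a b h
  have ha := a.isLt; have hb := b.isLt
  have : n' - 1 - (a:ℕ) = n' - 1 - (b:ℕ) := congrArg Fin.val h
  exact Fin.ext (by omega)

lemma adj_refl (k : ℕ) : ∀ (i : ℕ) (u v : Fin n'),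
    (cycleProcess k (SimpleGraph.pathGraph n') i).Adj u v →
    (cycleProcess k (SimpleGraph.pathGraph n') i).Adj (σ u) (σ v) := by
  intro i
  induction i with
  | zero =>
    intro u v h
    have := SimpleGraph.pathGraph_adj.mp h
    have hu := u.isLt; have hv := v.isLt
    exact SimpleGraph.pathGraph_adj.mpr (by simp only [σval]; omega)
  | succ i IH =>
    intro u v h
    rcases h with h | ⟨hne, p, hp, hl⟩
    · exact Or.inl (IH u v h)
    · refine Or.inr ⟨fun he => hne (σinj he), ?_⟩
      let f : (cycleProcess k (SimpleGraph.pathGraph n') i) →g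
          (cycleProcess k (SimpleGraph.pathGraph n') i) := ⟨σ, fun h => IH _ _ h⟩
      exact ⟨p.map f, p.map_isPath_of_injective σinj hp, by simpa using hl⟩

lemma chain {G : SimpleGraph (Fin n')} (k M : ℕ) (P : ℤ) (hk : 3 ≤ k)
    (hP : ∀ (a b t : ℕ), a + b ≤ t * M → (a * ((k:ℤ)-2) + b * k) + t ≤ t * P)
    (EDGE : ∀ (a b : ℕ) (u v : Fin n'), a + b ≤ M → (u:ℕ) < (v:ℕ) →
      ((v:ℕ) : ℤ) = (u:ℕ) + (P - a * ((k:ℤ)-2) - b * k) → G.Adj u v) :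
    ∀ (t α β : ℕ) (x y : Fin n'), α + β ≤ t * M →
      ((y:ℕ) : ℤ) = (x:ℕ) + (t * P - α * ((k:ℤ)-2) - β * k) →
      ∃ p : G.Walk x y, p.IsPath ∧ p.length = t ∧ ∀ z ∈ p.support, (x:ℕ) ≤ (z:ℕ) := by
  intro t
  induction t with
  | zero =>
    intro α β x y hb hy
    have hα : α = 0 := by omega
    have hβ : β = 0 := by omega
    subst hα; subst hβ
    have hxy : x = y := by
      apply Fin.ext
      have : ((y:ℕ) : ℤ) = ((x:ℕ) : ℤ) := by rw [hy]; push_cast; ring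
      exact_mod_cast this.symm
    subst hxy
    exact ⟨SimpleGraph.Walk.nil, by simp, by simp, by simp⟩
  | succ t IH =>
    intro α β x y hb hy
    set a := min α M with ha
    set b := min β (M - a) with hbdef
    have hab : a + b ≤ M := by omega
    set c := α - a with hc
    set d := β - b with hd
    have hcd : c + d ≤ t * M := by
      have : α + β ≤ (t+1) * M := hb
      have ht : (t+1) * M = t * M + M := by ring
      omega
    have hac : α = a + c := by omega
    have hbd : β = b + d := by omega
    have hk2 : (2:ℤ) ≤ (k:ℤ) := by exact_mod_cast (by omega : 2 ≤ k)
    have hpos1 : ((a:ℤ) * ((k:ℤ)-2) + b * k) + 1 ≤ P := by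
      have := hP a b 1 (by omega)
      simpa using this
    have hposr : ((c:ℤ) * ((k:ℤ)-2) + d * k) + t ≤ t * P := hP c d t hcd
    have hnn : (0:ℤ) ≤ P - a * ((k:ℤ)-2) - b * k := by
      have h2 : (0:ℤ) ≤ (a:ℤ) * ((k:ℤ)-2) := mul_nonneg (by positivity) (by linarith)
      have h3 : (0:ℤ) ≤ (b:ℤ) * (k:ℤ) := by positivity
      linarith
    set ℓ₁ : ℕ := (P - a * ((k:ℤ)-2) - b * k).toNat with hℓ₁def
    have hℓ₁ : (ℓ₁ : ℤ) = P - a * ((k:ℤ)-2) - b * k := Int.toNat_of_nonneg hnn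
    have hℓ₁pos : 1 ≤ ℓ₁ := by
      have : (1:ℤ) ≤ (ℓ₁:ℤ) := by rw [hℓ₁]; linarith
      exact_mod_cast this
    have hcnn : (0:ℤ) ≤ (c:ℤ) * ((k:ℤ)-2) + d * k := by
      have h2 : (0:ℤ) ≤ (c:ℤ) * ((k:ℤ)-2) := mul_nonneg (by positivity) (by linarith)
      have h3 : (0:ℤ) ≤ (d:ℤ) * (k:ℤ) := by positivity
      linarith
    have hle : ((x:ℕ) : ℤ) + ℓ₁ ≤ (y:ℕ) := by
      rw [hℓ₁, hy, hac, hbd]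
      push_cast
      have ht0 : (0:ℤ) ≤ t := by positivity
      nlinarith [hposr]
    have hxℓlt : (x:ℕ) + ℓ₁ < n' := by
      have := y.isLt
      have : (x:ℕ) + ℓ₁ ≤ (y:ℕ) := by exact_mod_cast hle
      omega
    set x' : Fin n' := ⟨(x:ℕ) + ℓ₁, hxℓlt⟩ with hx'
    have hx'v : (x' : ℕ) = (x:ℕ) + ℓ₁ := rfl
    have he : G.Adj x x' := by
      apply EDGE a b x x' hab (by simp [hx'v]; omega)
      rw [hx'v]; push_cast [hℓ₁]; ring
    have hy' : ((y:ℕ) : ℤ) = (x':ℕ) + ((t:ℤ) * P - c * ((k:ℤ)-2) - d * k) := by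
      rw [hx'v, hy, hac, hbd]
      push_cast [hℓ₁]
      ring
    obtain ⟨p', hp', hlen', hbd'⟩ := IH c d x' y hcd hy'
    refine ⟨SimpleGraph.Walk.cons he p', ?_, by simp [hlen'], ?_⟩
    · refine hp'.cons ?_
      intro hmem
      have := hbd' x hmem
      rw [hx'v] at this
      omega
    · intro z hz
      rcases List.mem_cons.mp (by simpa using hz) with h | h
      · subst h; omega
      · have := hbd' z h; rw [hx'v] at this; omega

lemma shapeA1 (k : ℕ) (hk : 3 ≤ k) (α β : ℕ) (x y : Fin n')
    (hlen : α + β + 1 = k - 1)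
    (hsum : (x:ℕ) + α + (k-1) = (y:ℕ) + β) (htop : (x:ℕ) + α + (k-1) ≤ n' - 1) :
    (cycleProcess k (SimpleGraph.pathGraph n') 2).Adj x y := by
  have hn1 : 1 ≤ n' := by have := x.isLt; omega
  have hyx : (x:ℕ) + α < (y:ℕ) := by omega
  set G1 := cycleProcess k (SimpleGraph.pathGraph n') 1 with hG1
  set t1 : Fin n' := ⟨(x:ℕ) + α, by omega⟩ with ht1
  set top : Fin n' := ⟨(x:ℕ) + α + (k-1), by omega⟩ with htop'
  obtain ⟨pA, hpA, hlenA, hbdA, -⟩ := stair (G := G1) (List.replicate α 1) x t1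
    (fun a ha => by rw [List.eq_of_mem_replicate ha])
    (by simp [ht1])
    (by rintro u v ⟨c, hc, huv⟩
        rw [List.eq_of_mem_replicate hc] at huv
        exact adj_one k 1 huv)
  have he : G1.Adj t1 top := adj_K k 1 hk le_rfl (by simp [ht1, htop'])
  obtain ⟨pB', hpB', hlenB, hbdB, -⟩ := stair (G := G1) (List.replicate β 1) y top
    (fun a ha => by rw [List.eq_of_mem_replicate ha])
    (by simp [htop']; omega)
    (by rintro u v ⟨c, hc, huv⟩
        rw [List.eq_of_mem_replicate hc] at huv
        exact adj_one k 1 huv)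
  set p : G1.Walk x y := pA.append (SimpleGraph.Walk.cons he pB'.reverse) with hp
  have hsupp : p.support = pA.support ++ pB'.support.reverse := by
    rw [hp, SimpleGraph.Walk.support_append, SimpleGraph.Walk.support_cons,
      SimpleGraph.Walk.support_reverse]
    rfl
  have hpath : p.IsPath := by
    rw [SimpleGraph.Walk.isPath_def, hsupp]
    refine List.Nodup.append (hpA.support_nodup) (List.nodup_reverse.mpr hpB'.support_nodup) ?_
    intro z hz1 hz2
    have h1 := (hbdA z hz1).2
    have h2 := (hbdB z (List.mem_reverse.mp hz2)).1
    simp [ht1] at h1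
    omega
  refine adj_succ_of_walk k _ 1 (fun hxy => ?_) p hpath ?_
  · rw [hxy] at hyx; omega
  · rw [hp]
    simp [SimpleGraph.Walk.length_append, SimpleGraph.Walk.length_cons,
      SimpleGraph.Walk.length_reverse, hlenA, hlenB]
    omega

lemma shapeS0 (k : ℕ) (hk : 3 ≤ k) (α β m : ℕ) (x y : Fin n')
    (hm : 1 ≤ m) (hlen : 1 + β + m + α = k - 1) (hβ : β + 2 ≤ k - 1)
    (hsum : (x:ℕ) + (k-1) + m*(k-1) + α = (y:ℕ) + β) :
    (cycleProcess k (SimpleGraph.pathGraph n') 2).Adj x y := by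
  have hyn := y.isLt
  have hmk : k - 1 ≤ m * (k-1) := by nlinarith
  have hxy : (x:ℕ) < (y:ℕ) := by omega
  set G1 := cycleProcess k (SimpleGraph.pathGraph n') 1 with hG1
  set top1 : Fin n' := ⟨(x:ℕ) + (k-1), by omega⟩ with htop1
  set bot : Fin n' := ⟨(x:ℕ) + (k-1) - β, by omega⟩ with hbot
  have he1 : G1.Adj x top1 := adj_K k 1 hk le_rfl (by simp [htop1])
  obtain ⟨p2', hp2', hlen2, hbd2, -⟩ := stair (G := G1) (List.replicate β 1) bot top1
    (fun a ha => by rw [List.eq_of_mem_replicate ha])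
    (by simp [hbot, htop1]; omega)
    (by rintro u v ⟨c, hc, huv⟩
        rw [List.eq_of_mem_replicate hc] at huv
        exact adj_one k 1 huv)
  obtain ⟨p3, hp3, hlen3, hbd3, htl3⟩ := stair (G := G1)
      (List.replicate m (k-1) ++ List.replicate α 1) bot y
    (by intro a ha
        rcases List.mem_append.mp ha with h | h
        · rw [List.eq_of_mem_replicate h]; omega
        · rw [List.eq_of_mem_replicate h])
    (by simp [hbot]; omega)
    (by rintro u v ⟨c, hc, huv⟩
        rcases List.mem_append.mp hc with h | h
        · rw [List.eq_of_mem_replicate h] at huv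
          exact adj_K k 1 hk le_rfl huv
        · rw [List.eq_of_mem_replicate h] at huv
          exact adj_one k 1 huv)
  have hhead : (List.replicate m (k-1) ++ List.replicate α 1).head? = some (k-1) := by
    rcases m with - | m
    · omega
    · rfl
  set p : G1.Walk x y := SimpleGraph.Walk.cons he1 (p2'.reverse.append p3) with hp
  have hsupp : p.support = x :: (p2'.support.reverse ++ p3.support.tail) := by
    rw [hp, SimpleGraph.Walk.support_cons, SimpleGraph.Walk.support_append,
      SimpleGraph.Walk.support_reverse]
  have htl3' : ∀ z ∈ p3.support.tail, (x:ℕ) + (k-1) - β + (k-1) ≤ (z:ℕ) := by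
    intro z hz
    have := htl3 z hz (k-1) hhead
    simpa [hbot] using this
  have hpath : p.IsPath := by
    rw [SimpleGraph.Walk.isPath_def, hsupp]
    rw [List.nodup_cons]
    constructor
    · intro hmem
      rcases List.mem_append.mp hmem with h | h
      · have := (hbd2 x (List.mem_reverse.mp h)).1
        simp [hbot] at this
        omega
      · have := htl3' x h
        omega
    · refine List.Nodup.append (List.nodup_reverse.mpr hp2'.support_nodup)
        (hp3.support_nodup.tail) ?_
      intro z hz1 hz2
      have h1 := (hbd2 z (List.mem_reverse.mp hz1)).2
      have h2 := htl3' z hz2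
      simp [htop1] at h1
      omega
  refine adj_succ_of_walk k _ 1 (fun hxy' => ?_) p hpath ?_
  · rw [hxy'] at hxy; omega
  · rw [hp]
    simp [SimpleGraph.Walk.length_append, SimpleGraph.Walk.length_reverse, hlen2, hlen3]
    omega

end CycleAux

namespace CycleAux

lemma main (k n' : ℕ) (hk : 3 ≤ k) (hn : 3 * (k-1) ≤ n') :
    ∀ (i ℓ α β : ℕ), α + β ≤ (k-1)^(i-2) * (k-2) →
      ((ℓ:ℤ) = ((k:ℤ)-1)^i - α*((k:ℤ)-2) - β*(k:ℤ)) → 1 ≤ ℓ → ℓ ≤ n' - 1 →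
      ∀ (x y : Fin n'), (x:ℕ) + ℓ = (y:ℕ) →
      (cycleProcess k (SimpleGraph.pathGraph n') i).Adj x y := by
  have hk2 : (2:ℤ) ≤ (k:ℤ) := by exact_mod_cast (by omega : 2 ≤ k)
  have hcast : ((k - 1 : ℕ) : ℤ) = (k:ℤ) - 1 := by
    push_cast [Nat.cast_sub (by omega : 1 ≤ k)]; ring
  intro i
  induction i with
  | zero =>
    intro ℓ α β hb hℓ h1 h2 x y hxy
    simp only [pow_zero] at hℓ
    have hα : α = 0 := by
      by_contra h
      have h1' : (1:ℤ) ≤ (α:ℤ) := by exact_mod_cast (by omega : 1 ≤ α)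
      have hβ0 : (0:ℤ) ≤ (β:ℤ) * k := by positivity
      have : (ℓ:ℤ) ≥ 1 := by exact_mod_cast h1
      nlinarith
    have hβ : β = 0 := by
      by_contra h
      have h1' : (1:ℤ) ≤ (β:ℤ) := by exact_mod_cast (by omega : 1 ≤ β)
      have hα0 : (0:ℤ) ≤ (α:ℤ) * ((k:ℤ)-2) := mul_nonneg (by positivity) (by linarith)
      have : (ℓ:ℤ) ≥ 1 := by exact_mod_cast h1
      nlinarith
    subst hα; subst hβ
    have hℓ1 : ℓ = 1 := by
      have : (ℓ:ℤ) = 1 := by rw [hℓ]; push_cast; ring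
      exact_mod_cast this
    subst hℓ1
    exact adj_one k 0 hxy
  | succ i IH =>
    rcases i with - | i
    · -- level 1
      intro ℓ α β hb hℓ h1 h2 x y hxy
      rw [show (0:ℕ)+1 = 1 from rfl, pow_one] at hℓ
      have hℓ1 : (1:ℤ) ≤ (ℓ:ℤ) := by exact_mod_cast h1
      have hβ : β = 0 := by
        by_contra h
        have h1' : (1:ℤ) ≤ (β:ℤ) := by exact_mod_cast (by omega : 1 ≤ β)
        have hα0 : (0:ℤ) ≤ (α:ℤ) * ((k:ℤ)-2) := mul_nonneg (by positivity) (by linarith)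
        nlinarith
      subst hβ
      rcases Nat.lt_or_ge α 2 with hα | hα
      · interval_cases α
        · -- ℓ = k - 1
          have : ℓ = k - 1 := by
            have : (ℓ:ℤ) = (k:ℤ) - 1 := by rw [hℓ]; push_cast; ring
            omega
          subst this
          exact adj_K k 1 hk le_rfl hxy
        · -- ℓ = 1
          have : ℓ = 1 := by
            have : (ℓ:ℤ) = 1 := by rw [hℓ]; push_cast; ring
            omega
          subst this
          exact adj_one k 1 hxy
      · exfalso
        have hα' : (2:ℤ) ≤ (α:ℤ) := by exact_mod_cast hα
        nlinarith
    rcases i with - | i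
    · -- level 2
      intro ℓ α β hb hℓ h1 h2 x y hxy
      rw [show (0:ℕ)+1+1-2 = 0 from rfl, pow_zero, one_mul] at hb
      have hxlt := x.isLt; have hylt := y.isLt
      have hKeyZ : (ℓ:ℤ) + β + (α+β)*((k:ℤ)-1) = ((k:ℤ)-1)*((k:ℤ)-1) + α := by
        rw [hℓ]; push_cast; ring
      have hKey : ℓ + β + (α+β)*(k-1) = (k-1)*(k-1) + α := by
        have hc : (((α+β)*(k-1) : ℕ) : ℤ) = (α+β)*((k:ℤ)-1) := by
          push_cast [hcast]; ring
        have hc2 : (((k-1)*(k-1) : ℕ) : ℤ) = ((k:ℤ)-1)*((k:ℤ)-1) := by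
          push_cast [hcast]; ring
        have : ((ℓ + β + (α+β)*(k-1) : ℕ) : ℤ) = (((k-1)*(k-1) + α : ℕ) : ℤ) := by
          push_cast [hcast]
          push_cast at hKeyZ
          linarith
        exact_mod_cast this
      by_cases hs : α + β + 3 ≤ k
      · -- S0 shape
        set m := k - 3 - (α + β) + 1 with hm'
        have hm : 1 ≤ m := by omega
        have hdist : m*(k-1) + (α+β)*(k-1) + (k-1) = (k-1)*(k-1) := by
          rw [show (k:ℕ)-1 = m + (α+β) + 1 from by omega]
          ring
        exact shapeS0 k hk α β m x y hm (by omega) (by omega)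
          (by omega)
      · have hseq : α + β = k - 2 := by omega
        have hd : (α+β)*(k-1) + (k-1) = (k-1)*(k-1) := by
          rw [show (k:ℕ)-1 = (α+β) + 1 from by omega]
          ring
        have hlin : ℓ + β = (k-1) + α := by omega
        by_cases htop : (x:ℕ) + α + (k-1) ≤ n' - 1
        · exact shapeA1 k hk α β x y (by omega) (by omega) htop
        · have hβx : β ≤ (x:ℕ) := by omega
          have hA := shapeA1 k hk α β (σ y) (σ x)
            (by omega)
            (by simp only [σval]; omega)
            (by simp only [σval]; omega)
          have := adj_refl k 2 _ _ hA
          have hσσ : ∀ z : Fin n', σ (σ z) = z := by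
            intro z
            have := z.isLt
            exact Fin.ext (by simp only [σval]; omega)
          rw [hσσ, hσσ] at this
          exact this.symm
    · -- level i + 3
      intro ℓ α β hb hℓ h1 h2 x y hxy
      rw [show i+1+1+1-2 = i+1 from rfl] at hb
      rw [show i+1+1+1 = i+3 from rfl] at hℓ
      rw [show i+1+1-2 = i from rfl, show i+1+1 = i+2 from rfl] at IH
      obtain ⟨M, hM⟩ : ∃ M : ℕ, M = (k-1)^i * (k-2) := ⟨_, rfl⟩
      obtain ⟨P, hP'⟩ : ∃ P : ℤ, P = ((k:ℤ)-1)^(i+2) := ⟨_, rfl⟩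
      have hMc : ((M:ℕ) : ℤ) = ((k:ℤ)-1)^i * ((k:ℤ)-2) := by
        rw [hM]
        push_cast [Nat.cast_sub (by omega : 1 ≤ k), Nat.cast_sub (by omega : 2 ≤ k)]
        ring
      have hone : (1:ℤ) ≤ ((k:ℤ)-1)^i := one_le_pow₀ (by linarith)
      have hMP : ((M:ℕ):ℤ) * k + 1 ≤ P := by
        have hPM : P - ((M:ℕ):ℤ) * k = ((k:ℤ)-1)^i := by
          rw [hMc, hP', pow_add]; ring
        linarith
      have hPpos : ∀ (a b t : ℕ), a + b ≤ t * M →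
          ((a:ℤ) * ((k:ℤ)-2) + b * k) + t ≤ t * P := by
        intro a b t habt
        have ha0 : (0:ℤ) ≤ (a:ℤ) := Int.natCast_nonneg a
        have ht0 : (0:ℤ) ≤ (t:ℤ) := Int.natCast_nonneg t
        have hc : ((a:ℤ)+b) ≤ ((t:ℤ)) * ((M:ℕ):ℤ) := by
          have := habt
          have hcc : ((a + b : ℕ):ℤ) ≤ ((t * M : ℕ):ℤ) := Int.ofNat_le.mpr habt
          push_cast at hcc
          linarith
        have e1 : (a:ℤ) * ((k:ℤ)-2) + b * k = ((a:ℤ)+b) * k - 2*a := by ring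
        have e2 : ((a:ℤ)+b) * k ≤ ((t:ℤ) * ((M:ℕ):ℤ)) * k :=
          mul_le_mul_of_nonneg_right hc (by linarith)
        have e3 : ((t:ℤ)) * (((M:ℕ):ℤ) * k + 1) ≤ (t:ℤ) * P :=
          mul_le_mul_of_nonneg_left hMP ht0
        have e4 : ((t:ℤ) * ((M:ℕ):ℤ)) * k = (t:ℤ) * (((M:ℕ):ℤ) * k) := by ring
        have e5 : ((t:ℤ)) * (((M:ℕ):ℤ) * k + 1) = (t:ℤ) * (((M:ℕ):ℤ) * k) + t := by ring
        linarith
      have hEDGE : ∀ (a b : ℕ) (u v : Fin n'), a + b ≤ M → (u:ℕ) < (v:ℕ) →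
          ((v:ℕ) : ℤ) = (u:ℕ) + (P - a * ((k:ℤ)-2) - b * k) →
          (cycleProcess k (SimpleGraph.pathGraph n') (i+2)).Adj u v := by
        intro a b u v hab huv heq
        have hvlt := v.isLt
        refine IH ((v:ℕ) - (u:ℕ)) a b ?_ ?_ (by omega) (by omega) u v (by omega)
        · rw [← hM]; exact hab
        · have : (((v:ℕ) - (u:ℕ) : ℕ) : ℤ) = ((v:ℕ):ℤ) - ((u:ℕ):ℤ) := by
            push_cast [Nat.cast_sub (le_of_lt huv)]; ring
          rw [this, heq, hP']
          ring
      have hbM : α + β ≤ (k-1) * M := by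
        have he1 : (k-1)^(i+1)*(k-2) = (k-1)*M := by
          rw [pow_succ, hM]
          ring
        omega
      have hy' : ((y:ℕ) : ℤ) = (x:ℕ) + (((k-1:ℕ):ℤ) * P - α * ((k:ℤ)-2) - β * k) := by
        have hxyz : ((y:ℕ):ℤ) = ((x:ℕ):ℤ) + (ℓ:ℤ) := by exact_mod_cast congrArg (Nat.cast : ℕ → ℤ) hxy.symm
        rw [hxyz, hℓ, hcast, hP', show i+3 = (i+2)+1 from rfl, pow_succ]
        ring
      obtain ⟨p, hp, hlen, -⟩ := chain k M P hk hPpos hEDGE (k-1) α β x y hbM hy'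
      refine adj_succ_of_walk k _ (i+2) ?_ p hp (by omega)
      intro he
      rw [he] at hxy
      omega

end CycleAux

/-- For `n' ≥ 3(k-1)`, every difference `ℓ ∈ A'_i ∩ [n'-1]` occurs as an edge of the
`C_k`-process on `P_{n'}` at time `i`, where
`A'_i = {(k-1)^i - α(k-2) - βk : α + β ≤ (k-1)^{i-2}(k-2)}`. -/
theorem cycleProcess_path_A'_subset_D (k n' : ℕ) (hk : 3 ≤ k) (hn : 3 * (k - 1) ≤ n')
    (i ℓ : ℕ)
    (hℓ : ∃ α β : ℕ, α + β ≤ (k - 1) ^ (i - 2) * (k - 2) ∧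
      (ℓ : ℤ) = ((k : ℤ) - 1) ^ i - α * ((k : ℤ) - 2) - β * k)
    (h1 : 1 ≤ ℓ) (h2 : ℓ ≤ n' - 1) (x y : Fin n') (hxy : (x : ℕ) + ℓ = (y : ℕ)) :
    (cycleProcess k (SimpleGraph.pathGraph n') i).Adj x y := by
  obtain ⟨α, β, hb, heq⟩ := hℓ
  exact CycleAux.main k n' hk hn i ℓ α β hb heq h1 h2 x y hxy
end

section
/- Let G be a connected graph whose C_k-bootstrap process (G_i) satisfies G_1 ≠ G_2 (i.e., the process takes at least 2 steps to stabilise). Then every vertex of G is contained in a k-cycle in G_2. -/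
open SimpleGraph Walk

section helpers
variable {V : Type*} {H : SimpleGraph V}



/-- Any path has a "suffix" path (ending at the same endpoint) of any shorter length. -/
lemma exists_suffix_path : ∀ (n : ℕ) ⦃u z : V⦄ (p : H.Walk u z), p.IsPath → p.length = n →
    ∀ j ≤ n, ∃ (u' : V) (q : H.Walk u' z), q.IsPath ∧ q.length = j ∧
      ∀ y ∈ q.support, y ∈ p.support := by
  intro n
  induction n with
  | zero =>
    intro u z p hp hl j hj
    exact ⟨u, p, hp, by omega, fun y hy => hy⟩
  | succ n ih =>
    intro u z p hp hl j hj
    rcases eq_or_lt_of_le hj with rfl | hlt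
    · exact ⟨u, p, hp, hl, fun y hy => hy⟩
    · cases p with
      | nil => simp at hl
      | cons h q =>
        have hq : q.IsPath := hp.of_cons
        have hql : q.length = n := by simpa using hl
        obtain ⟨u', r, hr, hrl, hrs⟩ := ih q hq hql j (by omega)
        exact ⟨u', r, hr, hrl, fun y hy => by
          simp only [support_cons, List.mem_cons]
          exact Or.inr (hrs y hy)⟩

/-- Any path has a prefix path (from the same start) of any shorter length. -/
lemma exists_prefix_path {u z : V} (p : H.Walk u z) (hp : p.IsPath) (j : ℕ)
    (hj : j ≤ p.length) :
    ∃ (z' : V) (q : H.Walk u z'), q.IsPath ∧ q.length = j ∧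
      ∀ y ∈ q.support, y ∈ p.support := by
  obtain ⟨u', r, hr, hrl, hrs⟩ :=
    exists_suffix_path p.reverse.length p.reverse hp.reverse rfl j (by simpa using hj)
  refine ⟨u', r.reverse, hr.reverse, by simpa using hrl, fun y hy => ?_⟩
  have := hrs y (by simpa using hy)
  simpa using this

/-- From a cycle based at `x`, a path from `x` of length one less, inside the cycle. -/
lemma cycle_gives_path {x : V} (D : H.Walk x x) (hD : D.IsCycle) :
    ∃ (z : V) (r : H.Walk x z), r.IsPath ∧ r.length + 1 = D.length ∧
      ∀ y ∈ r.support, y ∈ D.support := by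
  cases D with
  | nil => exact absurd rfl hD.ne_nil
  | cons h t =>
    rw [cons_isCycle_iff] at hD
    refine ⟨_, t.reverse, hD.1.reverse, by simp, fun y hy => ?_⟩
    simp only [support_cons, List.mem_cons]
    exact Or.inr (by simpa using hy)

/-- Trim a walk at the first vertex belonging to a list `Cs`. -/
lemma trim_walk (Cs : List V) : ∀ {v x : V} (w : H.Walk v x), x ∈ Cs →
    ∃ (c : V) (q : H.Walk v c), q.IsPath ∧ c ∈ Cs ∧
      ∀ y ∈ q.support, y ∈ Cs → y = c := by
  classical
  intro v x w
  induction w with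
  | nil =>
    intro hx
    exact ⟨_, Walk.nil, IsPath.nil, hx, fun y hy _ => by simpa using hy⟩
  | @cons a b x h w' ih =>
    intro hx
    by_cases ha : a ∈ Cs
    · exact ⟨a, Walk.nil, IsPath.nil, ha, fun y hy _ => by simpa using hy⟩
    · obtain ⟨c, q', hq', hc, hmeet⟩ := ih hx
      by_cases hmem : a ∈ q'.support
      · refine ⟨c, q'.dropUntil a hmem, hq'.dropUntil hmem, hc, fun y hy hyC => ?_⟩
        exact hmeet y (q'.support_dropUntil_subset hmem hy) hyC
      · refine ⟨c, Walk.cons h q', hq'.cons hmem, hc, fun y hy hyC => ?_⟩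
        simp only [support_cons, List.mem_cons] at hy
        rcases hy with rfl | hy
        · exact absurd hyC ha
        · exact hmeet y hy hyC

/-- The edge joining the two endpoints of a long path is not on the path. -/
lemma ends_edge_not_mem {v z : V} (p : H.Walk v z) (hp : p.IsPath) (hl : 2 ≤ p.length) :
    s(v, z) ∉ p.edges := by
  cases p with
  | nil => simp
  | @cons a b c h q =>
    rw [cons_isPath_iff] at hp
    intro hmem
    simp only [edges_cons, List.mem_cons] at hmem
    rcases hmem with heq | hmem
    · rw [Sym2.eq_iff] at heq
      rcases heq with ⟨-, rfl⟩ | ⟨rfl, -⟩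
      · have : q = Walk.nil := isPath_iff_eq_nil.mp hp.1
        subst this
        simp at hl
      · exact h.ne rfl
    · exact hp.2 (q.fst_mem_support_of_mem_edges hmem)

end helpers

/-- If the `C_k`-process on a connected graph `G` takes at least two steps to stabilise
(`G_1 ≠ G_2`), then every vertex lies on a `k`-cycle at time `2`. -/
theorem cycleProcess_cycle_at_time_two (k : ℕ) (hk : 3 ≤ k) {V : Type*}
    (G : SimpleGraph V) (hconn : G.Connected)
    (hne : cycleProcess k G 1 ≠ cycleProcess k G 2) :
    ∀ v : V, ∃ c : (cycleProcess k G 2).Walk v v, c.IsCycle ∧ c.length = k := by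
  classical
  set G1 := cycleProcess k G 1 with hG1
  set G2 := cycleProcess k G 2 with hG2
  have h01 : G ≤ G1 := fun _ _ h => Or.inl h
  have h12 : G1 ≤ G2 := fun _ _ h => Or.inl h
  -- a new edge at time 2
  have hexists : ∃ u w, G2.Adj u w ∧ ¬ G1.Adj u w := by
    by_contra hcon
    push_neg at hcon
    exact hne (le_antisymm h12 fun {u w} h => hcon u w h)
  obtain ⟨u, w, h2uw, h1uw⟩ := hexists
  rcases h2uw with h | ⟨huw, Q, hQ, hQl⟩
  · exact absurd h h1uw
  -- Q has an edge not in G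
  have hQe : ∃ e ∈ Q.edges, e ∉ G.edgeSet := by
    by_contra hcon
    push_neg at hcon
    refine h1uw (Or.inr ⟨huw, Q.transfer G hcon, hQ.transfer hcon, ?_⟩)
    have hh := Walk.length_transfer Q hcon
    exact hh.trans hQl
  obtain ⟨e, heQ, heG⟩ := hQe
  induction e using Sym2.ind with
  | _ x y =>
  have hxy1 : G1.Adj x y := Q.adj_of_mem_edges heQ
  have hxy0 : ¬ G.Adj x y := fun h => heG ((G.mem_edgeSet).mpr h)
  have hxy1' : G1.Adj x y := Q.adj_of_mem_edges heQ
  rcases hxy1 with h | ⟨hxyne, R, hR, hRl⟩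
  · exact absurd h hxy0
  -- the k-cycle C in G1
  have hGsub : ∀ e ∈ R.edges, e ∈ G1.edgeSet :=
    fun e he => edgeSet_mono h01 (R.edges_subset_edgeSet he)
  set R1 : G1.Walk x y := R.transfer G1 hGsub with hR1
  have hR1p : R1.IsPath := hR.transfer hGsub
  have hR1l : R1.length = k - 1 := by
    have := Walk.length_transfer R hGsub
    rw [hR1]; omega
  set C : G1.Walk x x := Walk.cons hxy1' R1.reverse with hC
  have hCcyc : C.IsCycle := by
    rw [hC, Walk.cons_isCycle_iff]
    refine ⟨hR1p.reverse, fun hmem => ?_⟩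
    rw [Walk.edges_reverse, List.mem_reverse] at hmem
    rw [hR1, Walk.edges_transfer] at hmem
    exact hxy0 (R.adj_of_mem_edges hmem)
  have hClen : C.length = k := by
    rw [hC]
    simp only [Walk.length_cons, Walk.length_reverse]
    omega
  -- every vertex has a path of length k-1 in G1
  intro v
  obtain ⟨z, p, hp, hplen⟩ :
      ∃ (z : V) (p : G1.Walk v z), p.IsPath ∧ p.length = k - 1 := by
    obtain ⟨w0⟩ := hconn.preconnected v x
    have hw0sub : ∀ e ∈ w0.edges, e ∈ G1.edgeSet :=
      fun e he => edgeSet_mono h01 (w0.edges_subset_edgeSet he)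
    obtain ⟨c, q, hq, hcC, hmeet⟩ :=
      trim_walk C.support (w0.transfer G1 hw0sub)
        C.start_mem_support
    by_cases hlen : k - 1 ≤ q.length
    · obtain ⟨z', q', hq', hq'l, _⟩ := exists_prefix_path q hq (k - 1) hlen
      exact ⟨z', q', hq', hq'l⟩
    · push_neg at hlen
      set D : G1.Walk c c := C.rotate c hcC with hD
      have hDcyc : D.IsCycle := hCcyc.rotate hcC
      have hDsupp : ∀ y' ∈ D.support, y' ∈ C.support := by
        intro y' hy'
        rw [Walk.support_eq_cons, List.mem_cons] at hy'
        rcases hy' with rfl | hy'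
        · exact hcC
        · exact List.mem_of_mem_tail ((Walk.support_rotate C c hcC).perm.mem_iff.mp hy')
      have hDlen : D.length = k := by
        have h1 := (Walk.rotate_edges C c hcC).perm.length_eq
        have h2 := Walk.length_edges (C.rotate c hcC)
        have h3 := Walk.length_edges C
        rw [hD]; omega
      obtain ⟨z, r, hr, hrl, hrs⟩ := cycle_gives_path D hDcyc
      have hrlen : r.length = k - 1 := by omega
      obtain ⟨z', r', hr', hr'l, hr's⟩ :=
        exists_prefix_path r hr (k - 1 - q.length) (by omega)
      refine ⟨z', q.append r', ?_, ?_⟩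
      · rw [Walk.isPath_def, Walk.support_append]
        refine List.Nodup.append hq.support_nodup (hr'.support_nodup.tail) ?_
        intro y' hy'q hy't
        have hy'C : y' ∈ C.support :=
          hDsupp y' (hrs y' (hr's y' (List.mem_of_mem_tail hy't)))
        have hyc : y' = c := hmeet y' hy'q hy'C
        have hnotin : c ∉ r'.support.tail := by
          have h2 := hr'.support_nodup
          rw [Walk.support_eq_cons] at h2
          exact (List.nodup_cons.mp h2).1
        exact hnotin (hyc ▸ hy't)
      · rw [Walk.length_append]
        omega
  -- assemble the k-cycle in G2
  have hvz : v ≠ z := by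
    rintro rfl
    have := Walk.isPath_iff_eq_nil.mp hp
    rw [this] at hplen
    simp at hplen
    omega
  have hadj : G2.Adj v z := Or.inr ⟨hvz, p, hp, hplen⟩
  have hpsub : ∀ e ∈ p.edges, e ∈ G2.edgeSet :=
    fun e he => edgeSet_mono h12 (p.edges_subset_edgeSet he)
  refine ⟨Walk.cons hadj (p.transfer G2 hpsub).reverse, ?_, ?_⟩
  · rw [Walk.cons_isCycle_iff]
    refine ⟨(hp.transfer hpsub).reverse, fun hmem => ?_⟩
    rw [Walk.edges_reverse, List.mem_reverse, Walk.edges_transfer] at hmem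
    exact ends_edge_not_mem p hp (by omega) hmem
  · simp only [Walk.length_cons, Walk.length_reverse]
    have := Walk.length_transfer p hpsub
    omega
end
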